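/- For every q₂ ∈ ℝ³ with q₂ ≠ 0, the integral h(q₂) := ∫_{ℝ³} exp(−|q₁+q₂|²/2)·exp(−|q₁|²/2)·( exp(|q₁+q₂|·|q₂|) − exp(−|q₁+q₂|·|q₂|) ) / ( |q₁+q₂|·|q₂| ) dq₁ equals (2π^{3/2}/|q₂|²)·exp(−|q₂|²/2)·( exp(|q₂|²) − 1 ). -/

import Mathlib

open MeasureTheory Real

/-- `ℝ³` as a Euclidean space. -/
noncomputable abbrev R3 := EuclideanSpace ℝ (Fin 3)

/-- The inner integral `h(q₂)` appearing in the computation of `J(1,0)`. -/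
noncomputable def hInt (q₂ : R3) : ℝ :=
  ∫ q₁ : R3,
    Real.exp (-‖q₁ + q₂‖ ^ 2 / 2) * Real.exp (-‖q₁‖ ^ 2 / 2) *
      ((Real.exp (‖q₁ + q₂‖ * ‖q₂‖) - Real.exp (-(‖q₁ + q₂‖ * ‖q₂‖))) /
        (‖q₁ + q₂‖ * ‖q₂‖))

open Set
open scoped RealInnerProductSpace

namespace PurityAux


lemma integrable_exp_quad (c : ℝ) : Integrable (fun r : ℝ => Real.exp (-r^2 + c*r)) := by
  have h : Integrable (fun r : ℝ => Real.exp (c^2/4) * Real.exp (-(1:ℝ) * (r - c/2)^2)) :=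
    ((integrable_exp_neg_mul_sq one_pos).comp_sub_right (c/2)).const_mul _
  refine h.congr (Filter.Eventually.of_forall fun r => ?_)
  dsimp only
  rw [← Real.exp_add]; congr 1; ring

lemma integral_exp_quad (c : ℝ) :
    ∫ r : ℝ, Real.exp (-r^2 + c*r) = Real.sqrt π * Real.exp (c^2/4) := by
  have h : ∀ r : ℝ, -r^2 + c*r = -(1:ℝ)*(r - c/2)^2 + c^2/4 := fun r => by ring
  simp_rw [h, Real.exp_add, integral_mul_const]
  rw [integral_sub_right_eq_self (fun x => Real.exp (-(1:ℝ)*x^2)) (c/2), integral_gaussian]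
  norm_num

lemma aux_one_dim {ρ : ℝ} (hρ : 0 < ρ) :
    ∫ r in Ioi (0:ℝ), Real.exp (-r^2) * (Real.exp (ρ*r) - Real.exp (-(ρ*r)))^2
      = Real.sqrt π * (Real.exp (ρ^2) - 1) := by
  have e1 : ∀ r : ℝ, Real.exp (-r^2) * (Real.exp (ρ*r) - Real.exp (-(ρ*r)))^2
      = Real.exp (-r^2 + 2*ρ*r) + Real.exp (-r^2 + (-(2*ρ))*r) - 2 * Real.exp (-r^2 + 0*r) := by
    intro r
    have : (Real.exp (ρ*r) - Real.exp (-(ρ*r)))^2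
        = Real.exp (ρ*r)^2 - 2 * (Real.exp (ρ*r) * Real.exp (-(ρ*r))) + Real.exp (-(ρ*r))^2 := by
      ring
    rw [this]
    simp only [← Real.exp_add, ← Real.exp_nat_mul, ← Real.exp_add, mul_add, mul_sub, sq,
      ← Real.exp_add, Real.exp_zero]
    ring_nf
    simp [Real.exp_zero]
  simp_rw [e1]
  have i1 := (integrable_exp_quad (2*ρ)).integrableOn (s := Ioi 0)
  have i2 := (integrable_exp_quad (-(2*ρ))).integrableOn (s := Ioi 0)
  have i3 := (integrable_exp_quad 0).integrableOn (s := Ioi 0)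
  have i12 : IntegrableOn (fun r : ℝ => Real.exp (-r^2 + 2*ρ*r) + Real.exp (-r^2 + (-(2*ρ))*r))
      (Ioi 0) := i1.add i2
  have i3' : IntegrableOn (fun r : ℝ => 2 * Real.exp (-r^2 + 0*r)) (Ioi 0) := i3.const_mul 2
  rw [integral_sub i12 i3', integral_add i1 i2, integral_const_mul]
  have key2 : (∫ r in Ioi (0:ℝ), Real.exp (-r^2 + (-(2*ρ))*r))
      = ∫ r in Iic (0:ℝ), Real.exp (-r^2 + 2*ρ*r) := by
    rw [show (0:ℝ) = -0 by norm_num, ← integral_comp_neg_Ioi]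
    norm_num
  have key3 : (∫ r in Ioi (0:ℝ), Real.exp (-r^2 + 0*r)) = Real.sqrt π / 2 := by
    simp_rw [zero_mul, add_zero]
    have h := integral_gaussian_Ioi 1
    simp only [neg_mul, one_mul] at h
    rw [show (fun r : ℝ => Real.exp (-r^2)) = fun r : ℝ => Real.exp (-(r^2)) from
      funext fun r => by ring_nf] at *
    rw [h]; norm_num
  rw [key2, key3]
  have sum1 : (∫ r in Ioi (0:ℝ), Real.exp (-r^2 + 2*ρ*r))
      + (∫ r in Iic (0:ℝ), Real.exp (-r^2 + 2*ρ*r)) = Real.sqrt π * Real.exp (ρ^2) := by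
    rw [add_comm, intervalIntegral.integral_Iic_add_Ioi ((integrable_exp_quad (2*ρ)).integrableOn)
      ((integrable_exp_quad (2*ρ)).integrableOn), integral_exp_quad]
    congr 2
    ring
  rw [sum1]
  ring

lemma aux_subst (φ : ℝ → ℝ) (a : ℝ) :
    ∫ s in Ioi (0:ℝ), s * φ (Real.sqrt (a^2 + s^2)) = ∫ r in Ioi |a|, r * φ r := by
  have himg : (fun s : ℝ => Real.sqrt (a^2 + s^2)) '' Ioi 0 = Ioi |a| := by
    ext r
    constructor
    · rintro ⟨s, hs, rfl⟩
      rw [mem_Ioi] at hs ⊢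
      calc |a| = Real.sqrt (a^2) := (Real.sqrt_sq_eq_abs a).symm
      _ < Real.sqrt (a^2 + s^2) := Real.sqrt_lt_sqrt (sq_nonneg a) (by nlinarith)
    · intro hr
      rw [mem_Ioi] at hr
      have hr0 : 0 ≤ r := (abs_nonneg a).trans hr.le
      have hra : a^2 < r^2 := by
        have := abs_nonneg a
        nlinarith [sq_abs a]
      refine ⟨Real.sqrt (r^2 - a^2), ?_, ?_⟩
      · exact mem_Ioi.mpr (Real.sqrt_pos.mpr (by linarith))
      · show Real.sqrt (a^2 + Real.sqrt (r^2 - a^2)^2) = r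
        rw [Real.sq_sqrt (by linarith : (0:ℝ) ≤ r^2 - a^2)]
        rw [show a^2 + (r^2 - a^2) = r^2 by ring, Real.sqrt_sq hr0]
  have hderiv : ∀ s ∈ Ioi (0:ℝ),
      HasDerivWithinAt (fun s : ℝ => Real.sqrt (a^2 + s^2))
        (s / Real.sqrt (a^2 + s^2)) (Ioi 0) s := by
    intro s hs
    rw [mem_Ioi] at hs
    have hX : a^2 + s^2 ≠ 0 := by positivity
    have h1 : HasDerivAt (fun s : ℝ => a^2 + s^2) (2*s) s := by
      simpa using ((hasDerivAt_pow 2 s).const_add (a^2))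
    have h2 := (Real.hasDerivAt_sqrt hX).comp s h1
    have hXpos : 0 < Real.sqrt (a^2 + s^2) := Real.sqrt_pos.mpr (by positivity)
    refine h2.hasDerivWithinAt.congr_deriv ?_
    field_simp
  have hinj : InjOn (fun s : ℝ => Real.sqrt (a^2 + s^2)) (Ioi 0) := by
    intro s₁ h₁ s₂ h₂ h
    rw [mem_Ioi] at h₁ h₂
    simp only at h
    have := (Real.sqrt_inj (by positivity) (by positivity)).mp h
    nlinarith
  have := integral_image_eq_integral_abs_deriv_smul measurableSet_Ioi hderiv hinj
    (fun r => r * φ r)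
  rw [himg] at this
  rw [this]
  apply setIntegral_congr_fun measurableSet_Ioi
  intro s hs
  rw [mem_Ioi] at hs
  have hXpos : 0 < Real.sqrt (a^2 + s^2) := Real.sqrt_pos.mpr (by positivity)
  dsimp only
  rw [smul_eq_mul, abs_of_nonneg (by positivity : (0:ℝ) ≤ s / Real.sqrt (a^2+s^2))]
  field_simp

lemma aux_polar (φ : ℝ → ℝ) (a : ℝ) :
    ∫ v : ℝ × ℝ, φ (Real.sqrt (a^2 + v.1^2 + v.2^2))
      = (2*π) * ∫ r in Ioi |a|, r * φ r := by
  rw [← integral_comp_polarCoord_symm (fun v : ℝ × ℝ => φ (Real.sqrt (a^2 + v.1^2 + v.2^2)))]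
  have h1 : EqOn (fun p : ℝ × ℝ =>
        p.1 • φ (Real.sqrt (a^2 + (polarCoord.symm p).1^2 + (polarCoord.symm p).2^2)))
      (fun p : ℝ × ℝ => (p.1 * φ (Real.sqrt (a^2 + p.1^2))) * (1:ℝ))
      polarCoord.target := by
    intro p _
    have hsymm : polarCoord.symm p = (p.1 * Real.cos p.2, p.1 * Real.sin p.2) := rfl
    simp only [smul_eq_mul, mul_one, hsymm]
    have h2 : a^2 + (p.1 * Real.cos p.2)^2 + (p.1 * Real.sin p.2)^2 = a^2 + p.1^2 := by
      have := Real.sin_sq_add_cos_sq p.2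
      nlinarith
    rw [h2]
  rw [setIntegral_congr_fun polarCoord.open_target.measurableSet h1, polarCoord_target,
    Measure.volume_eq_prod, ← Measure.prod_restrict]
  rw [integral_prod_mul (fun s : ℝ => s * φ (Real.sqrt (a^2 + s^2))) (fun _ : ℝ => (1:ℝ))]
  rw [aux_subst φ a]
  rw [integral_const]
  simp only [Measure.restrict_apply_univ, Real.volume_Ioo, smul_eq_mul, sub_neg_eq_add, mul_one]
  rw [measureReal_restrict_apply_univ, Real.volume_real_Ioo, max_eq_left (by linarith [Real.pi_pos])]
  ring


noncomputable def fA (ρ r : ℝ) : ℝ :=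
  Real.exp (-r^2) * ((Real.exp (r*ρ) - Real.exp (-(r*ρ)))/(r*ρ))

lemma fA_nonneg {ρ : ℝ} (hρ : 0 < ρ) {r : ℝ} (hr : 0 ≤ r) : 0 ≤ fA ρ r := by
  unfold fA
  apply mul_nonneg (Real.exp_nonneg _)
  apply div_nonneg _ (by positivity)
  have : -(r*ρ) ≤ r*ρ := by nlinarith
  linarith [Real.exp_le_exp.mpr this]

lemma fA_le {ρ : ℝ} (hρ : 0 < ρ) {r : ℝ} (hr : 0 ≤ r) :
    fA ρ r ≤ Real.exp (-r^2) * (2 * Real.exp (r*ρ)) := by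
  unfold fA
  apply mul_le_mul_of_nonneg_left _ (Real.exp_nonneg _)
  rcases eq_or_lt_of_le hr with h | h
  · simp [← h]
  · rw [div_le_iff₀ (by positivity)]
    have key : 1 - Real.exp (-(2*(r*ρ))) ≤ 2*(r*ρ) := by
      have := Real.add_one_le_exp (-(2*(r*ρ)))
      linarith
    have expand : Real.exp (r*ρ) - Real.exp (-(r*ρ))
        = Real.exp (r*ρ) * (1 - Real.exp (-(2*(r*ρ)))) := by
      rw [mul_sub, mul_one, ← Real.exp_add]
      ring_nf
    rw [expand]
    calc Real.exp (r*ρ) * (1 - Real.exp (-(2*(r*ρ))))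
        ≤ Real.exp (r*ρ) * (2*(r*ρ)) :=
          mul_le_mul_of_nonneg_left key (Real.exp_nonneg _)
      _ = 2 * Real.exp (r*ρ) * (r*ρ) := by ring

lemma fA_measurable (ρ : ℝ) : Measurable (fA ρ) := by
  unfold fA
  exact ((Real.continuous_exp.comp (continuous_pow 2).neg).measurable).mul
    ((((Real.continuous_exp.comp (continuous_mul_right ρ)).sub
      (Real.continuous_exp.comp (continuous_mul_right ρ).neg)).measurable).div
      (continuous_mul_right ρ).measurable)

lemma integrable_gauss3 (c : ℝ) (hc : 0 < c) :
    Integrable (fun x : R3 => Real.exp (-c * ‖x‖^2)) := by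
  have h0 : Integrable (fun v : R3 =>
      Complex.exp (-(c:ℂ) * (‖v‖:ℂ)^2 + 0 * ((inner ℝ (0:R3) v : ℝ) : ℂ))) :=
    GaussianFourier.integrable_cexp_neg_mul_sq_norm_add (by simpa using hc) 0 0
  have h1 := h0.norm
  refine h1.congr (Filter.Eventually.of_forall fun v => ?_)
  simp only [zero_mul, add_zero, Complex.norm_exp]
  rw [show -(c:ℂ) * (‖v‖:ℂ)^2 = ((-c * ‖v‖^2 : ℝ) : ℂ) by push_cast; ring, Complex.ofReal_re]

lemma integrable_main {ρ : ℝ} (hρ : 0 < ρ) (q₂ : R3) (hq : ‖q₂‖ = ρ) :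
    Integrable (fun x : R3 => Real.exp ⟪x, q₂⟫ * fA ρ ‖x‖) := by
  have hmaj : Integrable (fun x : R3 => (2 * Real.exp (2*ρ^2)) * Real.exp (-(1/2) * ‖x‖^2)) :=
    (integrable_gauss3 (1/2) (by norm_num)).const_mul _
  refine hmaj.mono' ?_ ?_
  · refine Measurable.aestronglyMeasurable ?_
    exact ((Real.continuous_exp.comp (continuous_id.inner continuous_const)).measurable).mul
      ((fA_measurable ρ).comp continuous_norm.measurable)
  · refine Filter.Eventually.of_forall fun x => ?_
    have hr : (0:ℝ) ≤ ‖x‖ := norm_nonneg x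
    have h1 : Real.exp ⟪x, q₂⟫ ≤ Real.exp (‖x‖ * ρ) := by
      apply Real.exp_le_exp.mpr
      calc ⟪x, q₂⟫ ≤ ‖x‖ * ‖q₂‖ := real_inner_le_norm x q₂
        _ = ‖x‖ * ρ := by rw [hq]
    have h2 : 0 ≤ fA ρ ‖x‖ := fA_nonneg hρ hr
    have h3 := fA_le hρ hr
    rw [Real.norm_eq_abs, abs_of_nonneg (mul_nonneg (Real.exp_nonneg _) h2)]
    calc Real.exp ⟪x, q₂⟫ * fA ρ ‖x‖
        ≤ Real.exp (‖x‖ * ρ) * (Real.exp (-‖x‖^2) * (2 * Real.exp (‖x‖*ρ))) := by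
          apply mul_le_mul h1 h3 h2 (Real.exp_nonneg _)
      _ = 2 * Real.exp (-‖x‖^2 + 2*(‖x‖*ρ)) := by
          rw [show -‖x‖^2 + 2*(‖x‖*ρ) = ‖x‖*ρ + (-‖x‖^2 + ‖x‖*ρ) by ring, Real.exp_add,
            Real.exp_add]
          ring
      _ ≤ 2 * Real.exp (2*ρ^2 + -(1/2) * ‖x‖^2) := by
          have : -‖x‖^2 + 2*(‖x‖*ρ) ≤ 2*ρ^2 + -(1/2) * ‖x‖^2 := by nlinarith [sq_nonneg (‖x‖ - 2*ρ)]
          have := Real.exp_le_exp.mpr this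
          linarith
      _ = 2 * Real.exp (2*ρ^2) * Real.exp (-(1/2) * ‖x‖^2) := by
          rw [Real.exp_add]; ring

lemma exists_basis (ρ : ℝ) (hρ : 0 < ρ) (q₂ : R3) (hq : ‖q₂‖ = ρ) :
    ∃ b : OrthonormalBasis (Fin 3) ℝ R3, b 0 = ρ⁻¹ • q₂ := by
  have hcard : Module.finrank ℝ R3 = Fintype.card (Fin 3) := by
    simp [finrank_euclideanSpace_fin]
  have hon : Orthonormal ℝ (({0} : Set (Fin 3)).restrict (fun _ : Fin 3 => ρ⁻¹ • q₂)) := by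
    rw [orthonormal_iff_ite]
    intro i j
    have hij : i = j := Subtype.ext (by
      have h1 := i.2; have h2 := j.2
      simp only [Set.mem_singleton_iff] at h1 h2
      rw [h1, h2])
    rw [if_pos hij, hij]
    show ⟪ρ⁻¹ • q₂, ρ⁻¹ • q₂⟫ = 1
    rw [real_inner_smul_left, real_inner_smul_right, real_inner_self_eq_norm_sq, hq]
    field_simp
  obtain ⟨b, hb⟩ := hon.exists_orthonormalBasis_extension_of_card_eq hcard
  exact ⟨b, hb 0 rfl⟩



noncomputable def Wfun (ρ : ℝ) : ℝ × ℝ → ℝ :=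
  fun p => if |p.1| < p.2 then Real.exp (ρ*p.1) * (p.2 * fA ρ p.2) else 0

lemma integrable_exp_quad_half (c : ℝ) :
    Integrable (fun r : ℝ => Real.exp (-(1/2)*r^2 + c*r)) := by
  have h : Integrable (fun r : ℝ => Real.exp (c^2/2) * Real.exp (-(1/2) * (r - c)^2)) :=
    ((integrable_exp_neg_mul_sq (show (0:ℝ) < 1/2 by norm_num)).comp_sub_right c).const_mul _
  refine h.congr (Filter.Eventually.of_forall fun r => ?_)
  dsimp only
  rw [← Real.exp_add]; congr 1; ring

lemma Wfun_integrable {ρ : ℝ} (hρ : 0 < ρ) : Integrable (Wfun ρ) := by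
  have hmeas : Measurable (Wfun ρ) := by
    unfold Wfun
    exact Measurable.ite (measurableSet_lt measurable_fst.abs measurable_snd)
      ((Real.continuous_exp.comp (continuous_const.mul continuous_fst)).measurable.mul
        (measurable_snd.mul ((fA_measurable ρ).comp measurable_snd)))
      measurable_const
  have hbase : Integrable (fun p : ℝ × ℝ =>
      Real.exp (-(1/2)*p.1^2 + 0*p.1) * (2 * Real.exp (-(1/2)*p.2^2 + (2*ρ+1)*p.2))) := by
    rw [Measure.volume_eq_prod]
    exact (integrable_exp_quad_half 0).mul_prod ((integrable_exp_quad_half (2*ρ+1)).const_mul 2)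
  refine hbase.mono' hmeas.aestronglyMeasurable (Filter.Eventually.of_forall fun p => ?_)
  obtain ⟨a, r⟩ := p
  rw [Real.norm_eq_abs]
  unfold Wfun
  dsimp only
  by_cases h : |a| < r
  · rw [if_pos h]
    have hr0 : 0 < r := lt_of_le_of_lt (abs_nonneg a) h
    have ha2 : a^2 < r^2 := by nlinarith [sq_abs a, abs_nonneg a, le_abs_self a]
    have hWnn : 0 ≤ Real.exp (ρ*a) * (r * fA ρ r) :=
      mul_nonneg (Real.exp_nonneg _) (mul_nonneg hr0.le (fA_nonneg hρ hr0.le))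
    rw [abs_of_nonneg hWnn]
    have e1 : Real.exp (ρ*a) ≤ Real.exp (ρ*r) :=
      Real.exp_le_exp.mpr (by nlinarith [le_abs_self a])
    have e2 : r * fA ρ r ≤ Real.exp r * (Real.exp (-r^2) * (2*Real.exp (r*ρ))) := by
      have h3 := fA_le hρ hr0.le
      have hrexp : r ≤ Real.exp r := by linarith [Real.add_one_le_exp r]
      calc r * fA ρ r ≤ Real.exp r * fA ρ r :=
            mul_le_mul_of_nonneg_right hrexp (fA_nonneg hρ hr0.le)
        _ ≤ Real.exp r * (Real.exp (-r^2) * (2*Real.exp (r*ρ))) :=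
            mul_le_mul_of_nonneg_left h3 (Real.exp_nonneg _)
    calc Real.exp (ρ*a) * (r * fA ρ r)
        ≤ Real.exp (ρ*r) * (Real.exp r * (Real.exp (-r^2) * (2*Real.exp (r*ρ)))) :=
          mul_le_mul e1 e2 (mul_nonneg hr0.le (fA_nonneg hρ hr0.le)) (Real.exp_nonneg _)
      _ = 2 * Real.exp (ρ*r + r + -r^2 + r*ρ) := by
          rw [Real.exp_add, Real.exp_add, Real.exp_add]; ring
      _ ≤ 2 * Real.exp ((-(1/2)*a^2 + 0*a) + (-(1/2)*r^2 + (2*ρ+1)*r)) := by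
          have : ρ*r + r + -r^2 + r*ρ ≤ (-(1/2)*a^2 + 0*a) + (-(1/2)*r^2 + (2*ρ+1)*r) := by
            nlinarith
          linarith [Real.exp_le_exp.mpr this]
      _ = Real.exp (-(1/2)*a^2 + 0*a) * (2 * Real.exp (-(1/2)*r^2 + (2*ρ+1)*r)) := by
          rw [Real.exp_add]; ring
  · rw [if_neg h, abs_zero]
    positivity

lemma swap_eval {ρ : ℝ} (hρ : 0 < ρ) :
    ∫ a : ℝ, Real.exp (ρ*a) * ((2*π) * ∫ r in Ioi |a|, r * fA ρ r)
      = (2*π) * ((1/ρ^2) * (Real.sqrt π * (Real.exp (ρ^2) - 1))) := by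
  have h1 : ∀ a : ℝ, ∫ r : ℝ, Wfun ρ (a, r)
      = Real.exp (ρ*a) * ∫ r in Ioi |a|, r * fA ρ r := by
    intro a
    rw [show (fun r : ℝ => Wfun ρ (a,r))
        = (Ioi |a|).indicator (fun r => Real.exp (ρ*a) * (r * fA ρ r)) from funext fun r => by
      simp [Wfun, Set.indicator_apply, mem_Ioi]]
    rw [integral_indicator measurableSet_Ioi, integral_const_mul]
  have h2 : ∀ r : ℝ, (∫ a : ℝ, Wfun ρ (a, r))
      = (Ioi (0:ℝ)).indicator
        (fun r => (1/ρ^2) * (Real.exp (-r^2) * (Real.exp (ρ*r) - Real.exp (-(ρ*r)))^2)) r := by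
    intro r
    by_cases hr : 0 < r
    · rw [indicator_of_mem (mem_Ioi.mpr hr)]
      rw [show (fun a : ℝ => Wfun ρ (a,r))
          = (Ioo (-r) r).indicator (fun a => Real.exp (ρ*a) * (r * fA ρ r)) from funext fun a => by
        simp [Wfun, Set.indicator_apply, mem_Ioo, abs_lt]]
      rw [integral_indicator measurableSet_Ioo, integral_mul_const]
      have hIoo : ∫ a in Ioo (-r) r, Real.exp (ρ*a)
          = (Real.exp (ρ*r) - Real.exp (-(ρ*r)))/ρ := by
        rw [← integral_Ioc_eq_integral_Ioo, ← intervalIntegral.integral_of_le (by linarith : -r ≤ r)]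
        rw [intervalIntegral.integral_comp_mul_left Real.exp hρ.ne']
        rw [show (∫ x in ρ * -r..ρ * r, Real.exp x) = Real.exp (ρ*r) - Real.exp (ρ * -r) by simp,
          smul_eq_mul]
        rw [show ρ * -r = -(ρ*r) by ring]
        ring
      rw [hIoo]
      unfold fA
      simp only [mul_comm r ρ]
      field_simp
    · rw [indicator_of_notMem (by simpa using hr)]
      rw [show (fun a : ℝ => Wfun ρ (a,r)) = fun _ => 0 from funext fun a => by
        simp only [Wfun, ite_eq_right_iff]
        intro hcon
        exfalso
        have := abs_nonneg a
        have := not_lt.mp hr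
        linarith]
      exact integral_zero _ _
  calc ∫ a : ℝ, Real.exp (ρ*a) * ((2*π) * ∫ r in Ioi |a|, r * fA ρ r)
      = 2*π * ∫ a : ℝ, ∫ r : ℝ, Wfun ρ (a, r) := by
        rw [← integral_const_mul]
        congr 1; funext a; rw [h1 a]; ring
    _ = 2*π * ∫ r : ℝ, ∫ a : ℝ, Wfun ρ (a, r) := by
        congr 1
        apply integral_integral_swap
        have := Wfun_integrable hρ
        rwa [Measure.volume_eq_prod] at this
    _ = 2*π * ∫ r in Ioi (0:ℝ),
          (1/ρ^2) * (Real.exp (-r^2) * (Real.exp (ρ*r) - Real.exp (-(ρ*r)))^2) := by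
        congr 1
        rw [← integral_indicator measurableSet_Ioi]
        exact integral_congr_ae (Filter.Eventually.of_forall h2)
    _ = (2*π) * ((1/ρ^2) * (Real.sqrt π * (Real.exp (ρ^2) - 1))) := by
        rw [integral_const_mul, aux_one_dim hρ]




lemma coords {ρ : ℝ} (hρ : 0 < ρ) (q₂ : R3) (hq : ‖q₂‖ = ρ) :
    ∫ x : R3, Real.exp ⟪x, q₂⟫ * fA ρ ‖x‖
      = ∫ a : ℝ, Real.exp (ρ*a) * ((2*π) * ∫ r in Ioi |a|, r * fA ρ r) := by
  obtain ⟨b, hb0⟩ := exists_basis ρ hρ q₂ hq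
  have hq2 : q₂ = ρ • b 0 := by
    rw [hb0, smul_smul, mul_inv_cancel₀ hρ.ne', one_smul]
  set g1 : EuclideanSpace ℝ (Fin 3) → ℝ := fun y => Real.exp (ρ * y 0) * fA ρ ‖y‖ with hg1
  set g2 : (Fin 3 → ℝ) → ℝ := fun w =>
    Real.exp (ρ * w 0) * fA ρ (Real.sqrt (w 0^2 + w 1^2 + w 2^2)) with hg2
  set g3 : ℝ × (Fin 2 → ℝ) → ℝ := fun p =>
    Real.exp (ρ * p.1) * fA ρ (Real.sqrt (p.1^2 + (p.2 0)^2 + (p.2 1)^2)) with hg3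
  -- pointwise identifications
  have hpoint1 : ∀ y : EuclideanSpace ℝ (Fin 3),
      Real.exp ⟪b.repr.symm y, q₂⟫ * fA ρ ‖b.repr.symm y‖ = g1 y := by
    intro y
    have hnorm : ‖b.repr.symm y‖ = ‖y‖ := LinearIsometryEquiv.norm_map _ y
    have hinner : ⟪b.repr.symm y, q₂⟫ = ρ * y 0 := by
      rw [hq2, real_inner_smul_right]
      have h := b.repr.inner_map_map (b.repr.symm y) (b 0)
      rw [← h, LinearIsometryEquiv.apply_symm_apply, b.repr_self,
        EuclideanSpace.inner_single_right]
      simp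
    rw [hnorm, hinner, hg1]
  have hpoint2 : ∀ w : Fin 3 → ℝ,
      g1 (MeasurableEquiv.toLp 2 (Fin 3 → ℝ) w) = g2 w := by
    intro w
    have hnorm3 : ‖MeasurableEquiv.toLp 2 (Fin 3 → ℝ) w‖
        = Real.sqrt (w 0^2 + w 1^2 + w 2^2) := by
      rw [EuclideanSpace.norm_eq]
      congr 1
      rw [Fin.sum_univ_three]
      have h : ∀ i : Fin 3, ‖(MeasurableEquiv.toLp 2 (Fin 3 → ℝ) w) i‖ = |w i| :=
        fun i => rfl
      rw [h 0, h 1, h 2, sq_abs, sq_abs, sq_abs]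
    show Real.exp (ρ * w 0) * fA ρ ‖MeasurableEquiv.toLp 2 (Fin 3 → ℝ) w‖ = g2 w
    rw [hnorm3, hg2]
  have hpoint3 : ∀ p : ℝ × (Fin 2 → ℝ),
      g2 ((MeasurableEquiv.piFinSuccAbove (fun _ : Fin 3 => ℝ) 0).symm p) = g3 p := fun p => rfl
  -- integrability transport
  have i0 := integrable_main hρ q₂ hq
  have i1 : Integrable g1 := by
    have := ((b.measurePreserving_repr_symm).integrable_comp_emb
      (b.repr.symm.toHomeomorph.measurableEmbedding)).mpr i0
    exact this.congr (Filter.Eventually.of_forall hpoint1)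
  have i2 : Integrable g2 := by
    have := (((EuclideanSpace.volume_preserving_symm_measurableEquiv_toLp (Fin 3)).symm _).integrable_comp_emb
      (MeasurableEquiv.measurableEmbedding _)).mpr i1
    exact this.congr (Filter.Eventually.of_forall hpoint2)
  have i3 : Integrable g3 := by
    have := (((volume_preserving_piFinSuccAbove (fun _ : Fin 3 => ℝ) 0).symm _).integrable_comp_emb
      (MeasurableEquiv.measurableEmbedding _)).mpr i2
    exact this.congr (Filter.Eventually.of_forall hpoint3)
  -- integral transport
  have stepA : ∫ x : R3, Real.exp ⟪x, q₂⟫ * fA ρ ‖x‖ = ∫ y, g1 y := by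
    rw [← (b.measurePreserving_repr_symm).integral_comp
      (b.repr.symm.toHomeomorph.measurableEmbedding)
      (fun x : R3 => Real.exp ⟪x, q₂⟫ * fA ρ ‖x‖)]
    exact integral_congr_ae (Filter.Eventually.of_forall hpoint1)
  have stepB : ∫ y, g1 y = ∫ w, g2 w := by
    rw [← ((EuclideanSpace.volume_preserving_symm_measurableEquiv_toLp (Fin 3)).symm _).integral_comp
      (MeasurableEquiv.measurableEmbedding _) g1]
    exact integral_congr_ae (Filter.Eventually.of_forall hpoint2)
  have stepC : ∫ w, g2 w = ∫ p, g3 p := by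
    rw [← ((volume_preserving_piFinSuccAbove (fun _ : Fin 3 => ℝ) 0).symm _).integral_comp
      (MeasurableEquiv.measurableEmbedding _) g2]
    exact integral_congr_ae (Filter.Eventually.of_forall hpoint3)
  -- Fubini
  have i3' : Integrable g3 (volume.prod volume) := by
    rwa [← Measure.volume_eq_prod]
  have stepD : ∫ p, g3 p = ∫ a : ℝ, ∫ u : Fin 2 → ℝ, g3 (a, u) := by
    rw [Measure.volume_eq_prod]
    exact integral_prod g3 i3'
  -- inner integral
  have stepE : ∀ a : ℝ, ∫ u : Fin 2 → ℝ, g3 (a, u)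
      = Real.exp (ρ*a) * ((2*π) * ∫ r in Ioi |a|, r * fA ρ r) := by
    intro a
    have e1 : ∫ u : Fin 2 → ℝ, g3 (a, u)
        = Real.exp (ρ*a) * ∫ u : Fin 2 → ℝ, fA ρ (Real.sqrt (a^2 + (u 0)^2 + (u 1)^2)) := by
      rw [← integral_const_mul]
    have e2 : ∫ u : Fin 2 → ℝ, fA ρ (Real.sqrt (a^2 + (u 0)^2 + (u 1)^2))
        = ∫ v : ℝ × ℝ, fA ρ (Real.sqrt (a^2 + v.1^2 + v.2^2)) := by
      rw [← ((volume_preserving_finTwoArrow ℝ).symm _).integral_comp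
        (MeasurableEquiv.measurableEmbedding _)
        (fun u : Fin 2 → ℝ => fA ρ (Real.sqrt (a^2 + (u 0)^2 + (u 1)^2)))]
      rfl
    rw [e1, e2, aux_polar (fA ρ) a]
  rw [stepA, stepB, stepC, stepD]
  exact integral_congr_ae (Filter.Eventually.of_forall stepE)
end PurityAux

open PurityAux in
/-- For `q₂ ≠ 0`, `h(q₂) = (2π^{3/2}/|q₂|²)·exp(−|q₂|²/2)·(exp(|q₂|²) − 1)`. -/
theorem purity_stmt12 (q₂ : R3) (hq₂ : q₂ ≠ 0) :
    hInt q₂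
      = (2 * Real.pi ^ ((3 : ℝ) / 2) / ‖q₂‖ ^ 2) * Real.exp (-‖q₂‖ ^ 2 / 2) *
          (Real.exp (‖q₂‖ ^ 2) - 1) := by
  have hρ : 0 < ‖q₂‖ := norm_pos_iff.mpr hq₂
  have step1 : hInt q₂
      = Real.exp (-‖q₂‖ ^ 2 / 2) * ∫ x : R3, Real.exp ⟪x, q₂⟫ * fA ‖q₂‖ ‖x‖ := by
    have e0 : hInt q₂ = ∫ x : R3,
        Real.exp (-‖x‖ ^ 2 / 2) * Real.exp (-‖x - q₂‖ ^ 2 / 2) *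
          ((Real.exp (‖x‖ * ‖q₂‖) - Real.exp (-(‖x‖ * ‖q₂‖))) / (‖x‖ * ‖q₂‖)) := by
      unfold hInt
      rw [← integral_add_right_eq_self (fun x : R3 =>
        Real.exp (-‖x‖ ^ 2 / 2) * Real.exp (-‖x - q₂‖ ^ 2 / 2) *
          ((Real.exp (‖x‖ * ‖q₂‖) - Real.exp (-(‖x‖ * ‖q₂‖))) / (‖x‖ * ‖q₂‖))) q₂]
      congr 1; funext q₁
      rw [add_sub_cancel_right]
    rw [e0, ← integral_const_mul]
    congr 1; funext x
    unfold fA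
    rw [norm_sub_sq_real]
    have hexp : Real.exp (-‖x‖^2/2) * Real.exp (-(‖x‖^2 - 2*⟪x,q₂⟫ + ‖q₂‖^2)/2)
        = Real.exp (-‖q₂‖^2/2) * Real.exp ⟪x,q₂⟫ * Real.exp (-‖x‖^2) := by
      rw [← Real.exp_add, ← Real.exp_add, ← Real.exp_add]; congr 1; ring
    calc Real.exp (-‖x‖^2/2) * Real.exp (-(‖x‖^2 - 2*⟪x,q₂⟫ + ‖q₂‖^2)/2) *
          ((Real.exp (‖x‖ * ‖q₂‖) - Real.exp (-(‖x‖ * ‖q₂‖))) / (‖x‖ * ‖q₂‖))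
        = (Real.exp (-‖q₂‖^2/2) * Real.exp ⟪x,q₂⟫ * Real.exp (-‖x‖^2)) *
          ((Real.exp (‖x‖ * ‖q₂‖) - Real.exp (-(‖x‖ * ‖q₂‖))) / (‖x‖ * ‖q₂‖)) := by rw [hexp]
      _ = _ := by ring
  rw [step1, coords hρ q₂ rfl, swap_eval hρ]
  rw [show ((3:ℝ)/2) = 1 + 1/2 by norm_num, Real.rpow_add Real.pi_pos, Real.rpow_one,
    ← Real.sqrt_eq_rpow]
  field_simp
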